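/- If ν is a Borel probability measure on R^d absolutely continuous with respect to Lebesgue measure with support in (0,1]^d, then β_ν(q) = d(1−q) for all q ∈ [0,1]. -/

import Mathlib

open MeasureTheory Filter
open scoped ENNReal Topology

/-- The half-open dyadic cube of generation `n` indexed by `k ∈ ℤ^d`. -/
def dyadicCube (d n : ℕ) (k : Fin d → ℤ) : Set (EuclideanSpace ℝ (Fin d)) :=
  {x | ∀ i, (k i : ℝ) * 2 ^ (-(n : ℤ)) < x i ∧ x i ≤ ((k i : ℝ) + 1) * 2 ^ (-(n : ℤ))}

/-- `Σ_{C ∈ D_n} ν(C)^q`, with the convention `0^0 = 0` (cubes of measure zero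
are discarded). -/
noncomputable def lqSum {d : ℕ} (ν : Measure (EuclideanSpace ℝ (Fin d)))
    (n : ℕ) (q : ℝ) : ℝ :=
  ∑' k : Fin d → ℤ,
    if ν (dyadicCube d n k) = 0 then 0 else (ν (dyadicCube d n k)).toReal ^ q

/-- The `n`-th approximation `β_{ν,n}(q) = log (Σ_{C ∈ D_n} ν(C)^q) / log 2^n`. -/
noncomputable def lqSpectrumN {d : ℕ} (ν : Measure (EuclideanSpace ℝ (Fin d)))
    (n : ℕ) (q : ℝ) : ℝ :=
  Real.log (lqSum ν n q) / (n * Real.log 2)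

/-- The `L^q`-spectrum `β_ν(q) = limsup_n β_{ν,n}(q)`. -/
noncomputable def lqSpectrum {d : ℕ} (ν : Measure (EuclideanSpace ℝ (Fin d)))
    (q : ℝ) : ℝ :=
  Filter.limsup (fun n : ℕ => lqSpectrumN ν n q) Filter.atTop

/-! ### Auxiliary definitions and lemmas -/

section Aux

set_option linter.unusedSectionVars false

/-- The box `(0,1]^d`. -/
def dBox (d : ℕ) : Set (EuclideanSpace ℝ (Fin d)) := {x | ∀ i, x i ∈ Set.Ioc (0:ℝ) 1}

/-- Indices of dyadic cubes of generation `n` meeting the box. -/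
noncomputable def dIdx (d n : ℕ) : Finset (Fin d → ℤ) := Fintype.piFinset fun _ => Finset.Ico (0:ℤ) (2^n)

lemma card_dIdx (d n : ℕ) : (dIdx d n).card = 2^(n*d) := by
  have h : ((2:ℤ)^n).toNat = 2^n := by
    have := Int.toNat_of_nonneg (by positivity : (0:ℤ) ≤ 2^n)
    exact_mod_cast this
  simp [dIdx, Fintype.card_piFinset, pow_mul, h]

lemma dyadicCube_eq (d n : ℕ) (k : Fin d → ℤ) :
    dyadicCube d n k = ((MeasurableEquiv.toLp 2 (Fin d → ℝ)).symm) ⁻¹'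
      (Set.univ.pi fun i => Set.Ioc ((k i : ℝ) * 2 ^ (-(n : ℤ))) (((k i : ℝ) + 1) * 2 ^ (-(n : ℤ)))) := by
  ext x
  simp [dyadicCube, Set.mem_pi, MeasurableEquiv.toLp_symm_apply, Set.mem_Ioc]

lemma measurableSet_dyadicCube (d n : ℕ) (k : Fin d → ℤ) :
    MeasurableSet (dyadicCube d n k) := by
  rw [dyadicCube_eq]
  exact ((MeasurableEquiv.toLp 2 (Fin d → ℝ)).symm).measurable
    (MeasurableSet.univ_pi fun i => measurableSet_Ioc)

lemma volume_dyadicCube (d n : ℕ) (k : Fin d → ℤ) :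
    volume (dyadicCube d n k) = ENNReal.ofReal (((2:ℝ) ^ (n*d))⁻¹) := by
  rw [dyadicCube_eq,
    (EuclideanSpace.volume_preserving_symm_measurableEquiv_toLp (Fin d)).measure_preimage
      ((MeasurableSet.univ_pi fun i => measurableSet_Ioc).nullMeasurableSet),
    volume_pi_pi]
  have : ∀ i : Fin d, volume (Set.Ioc ((k i : ℝ) * 2 ^ (-(n : ℤ))) (((k i : ℝ) + 1) * 2 ^ (-(n : ℤ))))
      = ENNReal.ofReal ((2:ℝ) ^ (-(n:ℤ))) := by
    intro i
    rw [Real.volume_Ioc]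
    ring_nf
  rw [Finset.prod_congr rfl (fun i _ => this i), Finset.prod_const, Finset.card_univ,
    Fintype.card_fin, ← ENNReal.ofReal_pow (by positivity)]
  congr 1
  rw [← zpow_natCast ((2:ℝ)^(-(n:ℤ))) d, ← zpow_mul, ← zpow_natCast (2:ℝ) (n*d), ← zpow_neg]
  push_cast
  ring_nf

lemma int_eq_of_mem (a b : ℤ) (y : ℝ) (ha : (a:ℝ) < y ∧ y ≤ a+1) (hb : (b:ℝ) < y ∧ y ≤ b+1) :
    a = b := by
  have h1 : a < b + 1 := by exact_mod_cast lt_of_lt_of_le ha.1 hb.2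
  have h2 : b < a + 1 := by exact_mod_cast lt_of_lt_of_le hb.1 ha.2
  omega

lemma dyadicCube_disjoint (d n : ℕ) : Set.Pairwise Set.univ
    (Function.onFun Disjoint fun k : Fin d → ℤ => dyadicCube d n k) := by
  intro k _ k' _ hkk'
  rw [Function.onFun, Set.disjoint_left]
  rintro x hx hx'
  apply hkk'
  funext i
  have e : (0:ℝ) < 2 ^ (-(n:ℤ)) := by positivity
  refine int_eq_of_mem _ _ (x i / 2 ^ (-(n:ℤ))) ⟨?_, ?_⟩ ⟨?_, ?_⟩
  · exact (lt_div_iff₀ e).2 (hx i).1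
  · exact (div_le_iff₀ e).2 (by linarith [(hx i).2])
  · exact (lt_div_iff₀ e).2 (hx' i).1
  · exact (div_le_iff₀ e).2 (by linarith [(hx' i).2])

lemma cube_inter_box (d n : ℕ) (k : Fin d → ℤ) (hk : k ∉ dIdx d n) :
    dyadicCube d n k ∩ dBox d = ∅ := by
  rw [Set.eq_empty_iff_forall_notMem]
  rintro x ⟨hx, hxb⟩
  apply hk
  rw [dIdx, Fintype.mem_piFinset]
  intro i
  rw [Finset.mem_Ico]
  have e : (0:ℝ) < 2 ^ (-(n:ℤ)) := by positivity
  have h1 := (hx i).1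
  have h2 := (hx i).2
  have hb1 := (hxb i).1
  have hb2 := (hxb i).2
  constructor
  · by_contra h
    push_neg at h
    have : ((k i : ℝ) + 1) ≤ 0 := by exact_mod_cast (by omega : k i + 1 ≤ 0)
    nlinarith
  · have : (k i : ℝ) * 2 ^ (-(n:ℤ)) < 1 := lt_of_lt_of_le h1 hb2
    have h2n : (2:ℝ) ^ (-(n:ℤ)) = ((2:ℝ)^n)⁻¹ := by
      rw [zpow_neg, zpow_natCast]
    rw [h2n] at this
    have hp : (0:ℝ) < 2^n := by positivity
    have : (k i : ℝ) < 2^n := by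
      rw [mul_inv_lt_iff₀' hp] at this; linarith
    exact_mod_cast this

lemma box_subset_union (d n : ℕ) : dBox d ⊆ ⋃ k ∈ dIdx d n, dyadicCube d n k := by
  intro x hx
  have e : (0:ℝ) < 2 ^ (-(n:ℤ)) := by positivity
  have h2n : (2:ℝ) ^ (-(n:ℤ)) = ((2:ℝ)^n)⁻¹ := by rw [zpow_neg, zpow_natCast]
  have hp : (0:ℝ) < 2^n := by positivity
  refine Set.mem_iUnion₂.2 ⟨fun i => ⌈x i * 2^n⌉ - 1, ?_, ?_⟩
  · rw [dIdx, Fintype.mem_piFinset]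
    intro i
    rw [Finset.mem_Ico]
    constructor
    · have : 0 < ⌈x i * 2^n⌉ := Int.lt_ceil.2 (by push_cast; nlinarith [(hx i).1])
      omega
    · have : ⌈x i * 2^n⌉ ≤ 2^n := Int.ceil_le.2 (by push_cast; nlinarith [(hx i).2])
      omega
  · intro i
    have hc1 : (⌈x i * 2^n⌉ : ℝ) - 1 < x i * 2^n := by
      have := Int.ceil_lt_add_one (x i * 2^n); linarith
    have hc2 : x i * 2^n ≤ (⌈x i * 2^n⌉ : ℝ) := Int.le_ceil _
    constructor
    · rw [h2n, ← div_eq_mul_inv, div_lt_iff₀ hp]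
      push_cast
      linarith
    · rw [h2n, ← div_eq_mul_inv, le_div_iff₀ hp]
      push_cast
      linarith

variable {d : ℕ} (ν : Measure (EuclideanSpace ℝ (Fin d))) [IsProbabilityMeasure ν]

variable (hsupp : ν (dBox d)ᶜ = 0)
include hsupp

lemma measure_cube_eq_zero {n : ℕ} {k : Fin d → ℤ} (hk : k ∉ dIdx d n) :
    ν (dyadicCube d n k) = 0 := by
  have : dyadicCube d n k ⊆ (dyadicCube d n k ∩ dBox d) ∪ (dBox d)ᶜ := by
    intro x hx
    by_cases h : x ∈ dBox d
    · exact Or.inl ⟨hx, h⟩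
    · exact Or.inr h
  refine le_antisymm ((measure_mono this).trans ?_) zero_le
  rw [cube_inter_box d n k hk]
  simp [hsupp]

lemma sum_measure_cubes (n : ℕ) :
    ∑ k ∈ dIdx d n, ν (dyadicCube d n k) = 1 := by
  rw [← measure_biUnion_finset ((dyadicCube_disjoint d n).mono (Set.subset_univ _))
      (fun k _ => measurableSet_dyadicCube d n k)]
  refine le_antisymm prob_le_one ?_
  calc (1:ℝ≥0∞) = ν (dBox d) := by
        have := measure_add_measure_compl (μ := ν) (s := dBox d) ?_
        · rw [hsupp, add_zero] at this; rw [this]; exact (measure_univ).symm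
        · have : dBox d = ⋂ i, (fun x : EuclideanSpace ℝ (Fin d) => x i) ⁻¹' Set.Ioc (0:ℝ) 1 := by
            ext x; simp [dBox]
          rw [this]
          exact MeasurableSet.iInter fun i => ((measurable_pi_apply i).comp (WithLp.measurable_ofLp 2 (Fin d → ℝ))) measurableSet_Ioc
    _ ≤ _ := measure_mono (box_subset_union d n)

lemma lqSum_eq_sum (n : ℕ) (q : ℝ) :
    lqSum ν n q = ∑ k ∈ dIdx d n,
      (if ν (dyadicCube d n k) = 0 then 0 else (ν (dyadicCube d n k)).toReal ^ q) := by
  refine tsum_eq_sum ?_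
  intro k hk
  simp [measure_cube_eq_zero ν hsupp hk]

lemma sum_toReal_cubes (n : ℕ) :
    ∑ k ∈ dIdx d n, (ν (dyadicCube d n k)).toReal = 1 := by
  rw [← ENNReal.toReal_sum (fun k _ => measure_ne_top ν _), sum_measure_cubes ν hsupp,
    ENNReal.toReal_one]

lemma lqSum_le (n : ℕ) {q : ℝ} (hq0 : 0 ≤ q) (hq1 : q ≤ 1) :
    lqSum ν n q ≤ 2 * (((2:ℝ) ^ (n*d))⁻¹) ^ (q-1) := by
  set s : ℝ := ((2:ℝ) ^ (n*d))⁻¹ with hs_def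
  have hs : 0 < s := by positivity
  rw [lqSum_eq_sum ν hsupp]
  have key : ∀ k ∈ dIdx d n,
      (if ν (dyadicCube d n k) = 0 then 0 else (ν (dyadicCube d n k)).toReal ^ q)
      ≤ s ^ q + (ν (dyadicCube d n k)).toReal * s ^ (q-1) := by
    intro k _
    by_cases hν : ν (dyadicCube d n k) = 0
    · simp only [hν, if_true]
      positivity
    · simp only [hν, if_false]
      set v : ℝ := (ν (dyadicCube d n k)).toReal with hv_def
      have hv : 0 < v := ENNReal.toReal_pos hν (measure_ne_top ν _)
      rcases le_or_gt v s with h | h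
      · have : v ^ q ≤ s ^ q := Real.rpow_le_rpow hv.le h hq0
        nlinarith [Real.rpow_nonneg hs.le (q-1), mul_pos hv (Real.rpow_pos_of_pos hs (q-1))]
      · have hq' : v ^ q = v * v ^ (q-1) := by
          have h3 := Real.rpow_add hv 1 (q-1)
          rw [Real.rpow_one] at h3
          rw [← h3]
          congr 1
          ring
        have h2 : v ^ (q-1) ≤ s ^ (q-1) :=
          Real.rpow_le_rpow_of_nonpos hs h.le (by linarith)
        have : v * v ^ (q-1) ≤ v * s ^ (q-1) := by
          exact mul_le_mul_of_nonneg_left h2 hv.le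
        have hsq : 0 ≤ s ^ q := Real.rpow_nonneg hs.le q
        linarith [hq' ▸ this]
  calc ∑ k ∈ dIdx d n, (if ν (dyadicCube d n k) = 0 then 0 else (ν (dyadicCube d n k)).toReal ^ q)
      ≤ ∑ k ∈ dIdx d n, (s ^ q + (ν (dyadicCube d n k)).toReal * s ^ (q-1)) :=
        Finset.sum_le_sum key
    _ = (dIdx d n).card * s ^ q + (∑ k ∈ dIdx d n, (ν (dyadicCube d n k)).toReal) * s ^ (q-1) := by
        rw [Finset.sum_add_distrib, Finset.sum_const, ← Finset.sum_mul]
        simp [nsmul_eq_mul]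
    _ = 2 * s ^ (q-1) := by
        rw [sum_toReal_cubes ν hsupp, card_dIdx, one_mul]
        have h1 : ((2:ℝ)^(n*d) : ℝ) * s ^ q = s ^ (q-1) := by
          have : ((2:ℝ)^(n*d)) = s ^ (-1 : ℝ) := by
            rw [hs_def, Real.rpow_neg_one, inv_inv]
          rw [this, ← Real.rpow_add hs]
          ring_nf
        push_cast
        rw [h1]
        ring

lemma lqSum_ge (n : ℕ) {q : ℝ} (hq1 : q ≤ 1) {ε : ℝ} (hε : 0 < ε)
    (H : ∀ A : Set (EuclideanSpace ℝ (Fin d)), MeasurableSet A →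
      volume A ≤ ENNReal.ofReal ε → ν A ≤ 1/2) :
    (1/2) * ((((2:ℝ) ^ (n*d))⁻¹) / ε) ^ (q-1) ≤ lqSum ν n q := by
  set s : ℝ := ((2:ℝ) ^ (n*d))⁻¹ with hs_def
  have hs : 0 < s := by positivity
  set t : ℝ := s / ε with ht_def
  have ht : 0 < t := by positivity
  set Hf : Finset (Fin d → ℤ) := (dIdx d n).filter (fun k => t ≤ (ν (dyadicCube d n k)).toReal)
    with hHf
  have hcard : (Hf.card : ℝ) * t ≤ 1 := by
    calc (Hf.card : ℝ) * t = ∑ _k ∈ Hf, t := by rw [Finset.sum_const, nsmul_eq_mul]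
      _ ≤ ∑ k ∈ Hf, (ν (dyadicCube d n k)).toReal :=
          Finset.sum_le_sum (fun k hk => (Finset.mem_filter.1 hk).2)
      _ ≤ ∑ k ∈ dIdx d n, (ν (dyadicCube d n k)).toReal := by
          refine Finset.sum_le_sum_of_subset_of_nonneg (Finset.filter_subset _ _) ?_
          intro k _ _; exact ENNReal.toReal_nonneg
      _ = 1 := sum_toReal_cubes ν hsupp n
  have hvol : volume (⋃ k ∈ Hf, dyadicCube d n k) ≤ ENNReal.ofReal ε := by
    calc volume (⋃ k ∈ Hf, dyadicCube d n k) ≤ ∑ k ∈ Hf, volume (dyadicCube d n k) :=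
          measure_biUnion_finset_le _ _
      _ = Hf.card * ENNReal.ofReal s := by
          rw [Finset.sum_congr rfl (fun k _ => volume_dyadicCube d n k), Finset.sum_const,
            nsmul_eq_mul]
      _ = ENNReal.ofReal (Hf.card * s) := by
          rw [ENNReal.ofReal_mul (by positivity)]
          simp
      _ ≤ ENNReal.ofReal ε := by
          apply ENNReal.ofReal_le_ofReal
          have hse : s = t * ε := by rw [ht_def]; field_simp
          calc (Hf.card : ℝ) * s = ((Hf.card : ℝ) * t) * ε := by rw [hse]; ring
            _ ≤ 1 * ε := by apply mul_le_mul_of_nonneg_right hcard hε.le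
            _ = ε := one_mul ε
  have hheavy : ∑ k ∈ Hf, ν (dyadicCube d n k) ≤ 1/2 := by
    rw [← measure_biUnion_finset ((dyadicCube_disjoint d n).mono (Set.subset_univ _))
      (fun k _ => measurableSet_dyadicCube d n k)]
    exact H _ (Finset.measurableSet_biUnion _ (fun k _ => measurableSet_dyadicCube d n k)) hvol
  set Lf : Finset (Fin d → ℤ) :=
    (dIdx d n).filter (fun k => ¬ t ≤ (ν (dyadicCube d n k)).toReal) with hLf
  have hlight : (1/2 : ℝ) ≤ ∑ k ∈ Lf, (ν (dyadicCube d n k)).toReal := by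
    have hsplit := Finset.sum_filter_add_sum_filter_not (dIdx d n)
      (fun k => t ≤ (ν (dyadicCube d n k)).toReal) (fun k => (ν (dyadicCube d n k)).toReal)
    have hH : ∑ k ∈ Hf, (ν (dyadicCube d n k)).toReal ≤ 1/2 := by
      have h2 := ENNReal.toReal_mono (by norm_num) hheavy
      rw [ENNReal.toReal_sum (fun k _ => measure_ne_top ν _)] at h2
      norm_num at h2
      linarith
    have htot := sum_toReal_cubes ν hsupp n
    rw [← hsplit] at htot
    linarith
  have key : ∀ k ∈ Lf, (ν (dyadicCube d n k)).toReal * t ^ (q-1)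
      ≤ (if ν (dyadicCube d n k) = 0 then 0 else (ν (dyadicCube d n k)).toReal ^ q) := by
    intro k hk
    have hkt : (ν (dyadicCube d n k)).toReal < t := by
      have := (Finset.mem_filter.1 hk).2
      push_neg at this
      exact this
    by_cases hν : ν (dyadicCube d n k) = 0
    · simp [hν]
    · simp only [hν, if_false]
      set v : ℝ := (ν (dyadicCube d n k)).toReal with hv_def
      have hv : 0 < v := ENNReal.toReal_pos hν (measure_ne_top ν _)
      have hq' : v ^ q = v * v ^ (q-1) := by
        have h2 := Real.rpow_add hv 1 (q-1)
        rw [Real.rpow_one] at h2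
        rw [← h2]
        congr 1
        ring
      rw [hq']
      exact mul_le_mul_of_nonneg_left
        (Real.rpow_le_rpow_of_nonpos hv hkt.le (by linarith)) hv.le
  calc (1/2 : ℝ) * t ^ (q-1) ≤ (∑ k ∈ Lf, (ν (dyadicCube d n k)).toReal) * t ^ (q-1) :=
        mul_le_mul_of_nonneg_right hlight (Real.rpow_nonneg ht.le _)
    _ = ∑ k ∈ Lf, (ν (dyadicCube d n k)).toReal * t ^ (q-1) := Finset.sum_mul _ _ _
    _ ≤ ∑ k ∈ Lf, (if ν (dyadicCube d n k) = 0 then 0 else (ν (dyadicCube d n k)).toReal ^ q) :=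
        Finset.sum_le_sum key
    _ ≤ ∑ k ∈ dIdx d n,
          (if ν (dyadicCube d n k) = 0 then 0 else (ν (dyadicCube d n k)).toReal ^ q) := by
        refine Finset.sum_le_sum_of_subset_of_nonneg (Finset.filter_subset _ _) ?_
        intro k _ _
        by_cases hν : ν (dyadicCube d n k) = 0
        · simp [hν]
        · simp only [hν, if_false]
          positivity
    _ = lqSum ν n q := (lqSum_eq_sum ν hsupp n q).symm

omit hsupp in
lemma exists_unif_ac (hac : ν ≪ (volume : Measure (EuclideanSpace ℝ (Fin d)))) :
    ∃ ε : ℝ, 0 < ε ∧ ∀ A : Set (EuclideanSpace ℝ (Fin d)), MeasurableSet A →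
      volume A ≤ ENNReal.ofReal ε → ν A ≤ 1/2 := by
  have hfin : ∫⁻ x, ν.rnDeriv volume x ∂volume ≠ ∞ :=
    (Measure.lintegral_rnDeriv_lt_top ν volume).ne
  obtain ⟨δ, hδ0, hδ⟩ := exists_pos_setLIntegral_lt_of_measure_lt (μ := volume)
    hfin (ε := 1/2) (by norm_num)
  obtain ⟨r, hr0, hrδ⟩ := ENNReal.lt_iff_exists_real_btwn.1 hδ0
  refine ⟨r, ?_, ?_⟩
  · rcases lt_or_ge 0 r with h | h
    · exact h
    · exfalso
      rw [← ENNReal.ofReal_zero] at hrδ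
      have := hrδ.1
      rw [ENNReal.ofReal_lt_ofReal_iff_of_nonneg le_rfl] at this
      linarith
  · intro A hA hvol
    have h1 : volume A < δ := lt_of_le_of_lt hvol hrδ.2
    have h2 := (hδ A h1).le
    calc ν A = ∫⁻ x in A, ν.rnDeriv volume x ∂volume := by
          rw [← withDensity_apply _ hA, Measure.withDensity_rnDeriv_eq _ _ hac]
      _ ≤ 1/2 := h2

end Aux

lemma log_bound (n d : ℕ) (hn : 1 ≤ n) {q ε S : ℝ} (hq0 : 0 ≤ q) (hq1 : q ≤ 1) (hε : 0 < ε)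
    (hlow : (1/2) * ((((2:ℝ)^(n*d))⁻¹)/ε)^(q-1) ≤ S)
    (hup : S ≤ 2 * (((2:ℝ)^(n*d))⁻¹)^(q-1)) :
    |Real.log S / (n * Real.log 2) - d*(1-q)| ≤ ((Real.log 2 + |Real.log ε|)/Real.log 2) / n := by
  set s : ℝ := ((2:ℝ)^(n*d))⁻¹ with hs_def
  have hs : 0 < s := by positivity
  have hS : 0 < S := lt_of_lt_of_le (by positivity) hlow
  have hlog2 : 0 < Real.log 2 := Real.log_pos (by norm_num)
  have hn0 : (0:ℝ) < n := by exact_mod_cast hn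
  have hlogs : Real.log s = -(((n*d:ℕ):ℝ) * Real.log 2) := by
    rw [hs_def, Real.log_inv, Real.log_pow]
  have hup' : Real.log S ≤ Real.log 2 + (q-1) * Real.log s := by
    have h := Real.log_le_log hS hup
    rwa [Real.log_mul two_ne_zero (Real.rpow_pos_of_pos hs _).ne', Real.log_rpow hs] at h
  have hlow' : Real.log (1/2) + (q-1) * (Real.log s - Real.log ε) ≤ Real.log S := by
    have h := Real.log_le_log (by positivity) hlow
    rwa [Real.log_mul (by norm_num) (Real.rpow_pos_of_pos (div_pos hs hε) _).ne',
      Real.log_rpow (div_pos hs hε), Real.log_div hs.ne' hε.ne'] at h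
  have hhalf : Real.log (1/2) = -Real.log 2 := by
    rw [one_div, Real.log_inv]
  set c : ℝ := Real.log S with hc
  set M : ℝ := Real.log 2 + |Real.log ε| with hM
  have habs : |c - (1-q)*((n*d:ℕ):ℝ) * Real.log 2| ≤ M := by
    rw [abs_le]
    have hle := le_abs_self (Real.log ε)
    have hge := neg_abs_le (Real.log ε)
    constructor
    · rw [hlogs, hhalf] at hlow'
      nlinarith
    · rw [hlogs] at hup'
      nlinarith [abs_nonneg (Real.log ε)]
  have heq : c / (n * Real.log 2) - d*(1-q)
      = (c - (1-q)*((n*d:ℕ):ℝ) * Real.log 2) / (n * Real.log 2) := by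
    field_simp
    push_cast
    ring
  rw [heq, abs_div, abs_of_pos (by positivity : (0:ℝ) < (n:ℝ) * Real.log 2)]
  rw [div_div]
  rw [div_le_div_iff₀ (by positivity) (by positivity)]
  calc |c - (1-q)*((n*d:ℕ):ℝ) * Real.log 2| * (Real.log 2 * n)
      ≤ M * (Real.log 2 * n) := by
        apply mul_le_mul_of_nonneg_right habs (by positivity)
    _ = M * (n * Real.log 2) := by ring

/-- If `ν` is a probability measure supported in `(0,1]^d` and absolutely
continuous with respect to Lebesgue measure, then `β_ν(q) ≤ d(1-q)` for all
`q ∈ [0,1]`, with equality: `β_ν(q) = d(1-q)` for all `q ∈ [0,1]`. -/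
theorem lqSpectrum_absolutelyContinuous {d : ℕ} (ν : Measure (EuclideanSpace ℝ (Fin d)))
    [IsProbabilityMeasure ν]
    (hsupp : ν ({x : EuclideanSpace ℝ (Fin d) | ∀ i, x i ∈ Set.Ioc (0 : ℝ) 1}ᶜ) = 0)
    (hac : ν ≪ (volume : Measure (EuclideanSpace ℝ (Fin d)))) :
    (∀ q ∈ Set.Icc (0 : ℝ) 1, lqSpectrum ν q ≤ d * (1 - q)) ∧
    ∀ q ∈ Set.Icc (0 : ℝ) 1, lqSpectrum ν q = d * (1 - q) := by
  have hsupp' : ν (dBox d)ᶜ = 0 := hsupp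
  obtain ⟨ε, hε, Hε⟩ := exists_unif_ac ν hac
  have main : ∀ q ∈ Set.Icc (0:ℝ) 1, lqSpectrum ν q = d * (1-q) := by
    rintro q ⟨hq0, hq1⟩
    set K : ℝ := (Real.log 2 + |Real.log ε|)/Real.log 2 with hK
    have hb : ∀ n : ℕ, 1 ≤ n → |lqSpectrumN ν n q - d*(1-q)| ≤ K / n := by
      intro n hn
      have hlow := lqSum_ge ν hsupp' n hq1 hε Hε
      have hup := lqSum_le ν hsupp' n hq0 hq1
      simpa [lqSpectrumN] using log_bound n d hn hq0 hq1 hε hlow hup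
    have h0 : Tendsto (fun n : ℕ => lqSpectrumN ν n q - d*(1-q)) atTop (𝓝 0) := by
      refine squeeze_zero_norm' ?_ (tendsto_const_div_atTop_nhds_zero_nat K)
      filter_upwards [eventually_ge_atTop 1] with n hn
      exact hb n hn
    have h1 : Tendsto (fun n : ℕ => lqSpectrumN ν n q) atTop (𝓝 (d*(1-q))) := by
      have := h0.add_const (d*(1-q))
      simpa using this
    exact h1.limsup_eq
  exact ⟨fun q hq => le_of_eq (main q hq), main⟩
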